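/- arXiv:2102.11364 — 7 statements merged into one kernel-verified Lean document; each statement's English description precedes it below -/
import Mathlib

section
/- Let (ρ, β₁, β₂, V) be a representation of a BiHom-Lie algebra (A, [·,·], α₁, α₂) such that α₁ and β₂ are bijective. Then the direct sum A ⊕ V is a BiHom-Lie algebra with bracket [x₁+v₁, x₂+v₂] = [x₁,x₂] + ρ(x₁)v₂ − ρ(α₁⁻¹α₂(x₂))β₁β₂⁻¹(v₁) and structure maps α₁⊕β₁, α₂⊕β₂. -/
/-! For `p = (x, u)` and `q = (y, v)`, evaluating the bracket on `(α₂ ⊕ β₂) p` and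
`(α₁ ⊕ β₁) q` cancels `α₁⁻¹` and `β₂⁻¹`:
`[α₂p, α₁q] = ([α₂x, α₁y], ρ(α₂x)β₁v - ρ(α₂y)β₁u)`. BiHom-skewsymmetry is then immediate. In the
BiHom-Jacobi identity the only twisted term left, `ρ(α₁⁻¹α₂[α₂y, α₁z])β₁β₂u`, is expanded by the
representation axiom into `ρ(α₂²y)ρ(α₂z)β₁u - ρ(α₂²z)ρ(α₂y)β₁u`, and the cyclic sum of the
`V`-components cancels term by term. -/

universe u

section Defs
variable {A : Type*} {V : Type*} [AddCommGroup A] [AddCommGroup V]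

/-- Commuting pair of maps. -/
def BHComm2 (a1 a2 : A → A) : Prop := ∀ x, a1 (a2 x) = a2 (a1 x)

/-- Multiplicativity of a map with respect to a binary operation. -/
def BHMultip (m : A → A → A) (a : A → A) : Prop := ∀ x y, a (m x y) = m (a x) (a y)

/-- BiHom-associative algebra. -/
def BHAssocAlg (m : A → A → A) (a1 a2 : A → A) : Prop :=
  BHComm2 a1 a2 ∧ BHMultip m a1 ∧ BHMultip m a2 ∧
  ∀ x y z, m (a1 x) (m y z) = m (m x y) (a2 z)

/-- Bimodule of a BiHom-associative algebra. -/
def BHAssocBimod (m : A → A → A) (a1 a2 : A → A)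
    (l r : A → V → V) (b1 b2 : V → V) : Prop :=
  BHComm2 b1 b2 ∧
  (∀ x y v, l (m x y) (b2 v) = l (a1 x) (l y v)) ∧
  (∀ x y v, r (m x y) (b1 v) = r (a2 y) (r x v)) ∧
  (∀ x y v, l (a1 x) (r y v) = r (a2 y) (l x v)) ∧
  (∀ x v, b1 (l x v) = l (a1 x) (b1 v)) ∧
  (∀ x v, b1 (r x v) = r (a1 x) (b1 v)) ∧
  (∀ x v, b2 (l x v) = l (a2 x) (b2 v)) ∧
  (∀ x v, b2 (r x v) = r (a2 x) (b2 v))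

/-- BiHom-Lie algebra. -/
def BHLieAlg (br : A → A → A) (a1 a2 : A → A) : Prop :=
  BHComm2 a1 a2 ∧ BHMultip br a1 ∧ BHMultip br a2 ∧
  (∀ x y, br (a2 x) (a1 y) = - br (a2 y) (a1 x)) ∧
  (∀ x y z,
    br (a2 (a2 x)) (br (a2 y) (a1 z)) + br (a2 (a2 z)) (br (a2 x) (a1 y)) +
      br (a2 (a2 y)) (br (a2 z) (a1 x)) = 0)

/-- Representation of a BiHom-Lie algebra. -/
def BHLieRep (br : A → A → A) (a1 a2 : A → A) (ρ : A → V → V) (b1 b2 : V → V) : Prop :=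
  BHComm2 b1 b2 ∧
  (∀ x y v, ρ (br (a2 x) y) (b2 v) = ρ (a1 (a2 x)) (ρ y v) - ρ (a2 y) (ρ (a1 x) v)) ∧
  (∀ x v, b1 (ρ x v) = ρ (a1 x) (b1 v)) ∧
  (∀ x v, b2 (ρ x v) = ρ (a2 x) (b2 v))

/-- BiHom-Leibniz identity. -/
def BHLeibniz (m br : A → A → A) (a1 a2 : A → A) : Prop :=
  ∀ x y z, br (a1 (a2 x)) (m y z) = m (br (a2 x) y) (a2 z) + m (a2 y) (br (a1 x) z)

/-- Noncommutative BiHom-Poisson algebra. -/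
def BHNCPoisson (m br : A → A → A) (a1 a2 : A → A) : Prop :=
  BHAssocAlg m a1 a2 ∧ BHLieAlg br a1 a2 ∧ BHLeibniz m br a1 a2

/-- Representation of a noncommutative BiHom-Poisson algebra. -/
def BHPoissonRep (m br : A → A → A) (a1 a2 : A → A)
    (l r ρ : A → V → V) (b1 b2 : V → V) : Prop :=
  BHAssocBimod m a1 a2 l r b1 b2 ∧ BHLieRep br a1 a2 ρ b1 b2 ∧
  (∀ x y v, l (br (a2 x) y) (b2 v) = ρ (a1 (a2 x)) (l y v) - l (a2 y) (ρ (a1 x) v)) ∧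
  (∀ x y v, r (br (a1 x) y) (b2 v) = ρ (a1 (a2 x)) (r y v) - r (a2 y) (ρ (a2 x) v)) ∧
  (∀ x y v, ρ (m x y) (b1 (b2 v)) = l (a1 x) (ρ y (b1 v)) + r (a1 y) (ρ x (b2 v)))

/-- BiHom-pre-Lie algebra. -/
def BHPreLieAlg (st : A → A → A) (a1 a2 : A → A) : Prop :=
  BHComm2 a1 a2 ∧ BHMultip st a1 ∧ BHMultip st a2 ∧
  ∀ x y z,
    st (st (a2 x) (a1 y)) (a2 z) - st (a1 (a2 x)) (st (a1 y) z) =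
      st (st (a2 y) (a1 x)) (a2 z) - st (a1 (a2 y)) (st (a1 x) z)

/-- Bimodule of a BiHom-pre-Lie algebra. -/
def BHPreLieBimod (st : A → A → A) (a1 a2 : A → A)
    (lst rst : A → V → V) (b1 b2 : V → V) : Prop :=
  BHComm2 b1 b2 ∧
  (∀ x y v, lst (st (a2 x) (a1 y) - st (a2 y) (a1 x)) (b2 v) =
      lst (a1 (a2 x)) (lst (a1 y) v) - lst (a1 (a2 y)) (lst (a1 x) v)) ∧
  (∀ x y v, rst (a2 y) (lst (a2 x) (b1 v) - rst (a1 x) (b2 v)) =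
      lst (a1 (a2 x)) (rst y (b1 v)) - rst (st (a1 x) y) (b1 (b2 v))) ∧
  (∀ x v, b1 (lst x v) = lst (a1 x) (b1 v)) ∧
  (∀ x v, b1 (rst x v) = rst (a1 x) (b1 v)) ∧
  (∀ x v, b2 (lst x v) = lst (a2 x) (b2 v)) ∧
  (∀ x v, b2 (rst x v) = rst (a2 x) (b2 v))

/-- BiHom-dendriform algebra. -/
def BHDendAlg (p s : A → A → A) (a1 a2 : A → A) : Prop :=
  BHComm2 a1 a2 ∧ BHMultip p a1 ∧ BHMultip p a2 ∧ BHMultip s a1 ∧ BHMultip s a2 ∧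
  (∀ x y z, p (p x y) (a2 z) = p (a1 x) (p y z + s y z)) ∧
  (∀ x y z, p (s x y) (a2 z) = s (a1 x) (p y z)) ∧
  (∀ x y z, s (a1 x) (s y z) = s (p x y + s x y) (a2 z))

/-- Bimodule of a BiHom-dendriform algebra. -/
def BHDendBimod (p s : A → A → A) (a1 a2 : A → A)
    (lp rp ls rs : A → V → V) (b1 b2 : V → V) : Prop :=
  BHComm2 b1 b2 ∧
  (∀ x y v, lp (p x y) (b2 v) = lp (a1 x) (lp y v + ls y v)) ∧
  (∀ x y v, rp (a2 x) (lp y v) = lp (a1 y) (rp x v + rs x v)) ∧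
  (∀ x y v, rp (a2 y) (rp x v) = rp (p x y + s x y) (b1 v)) ∧
  (∀ x y v, lp (s x y) (b2 v) = ls (a1 x) (lp y v)) ∧
  (∀ x y v, rp (a2 x) (ls y v) = ls (a1 y) (rp x v)) ∧
  (∀ x y v, rp (a2 x) (rs y v) = rs (p y x) (b1 v)) ∧
  (∀ x y v, ls (p x y + s x y) (b2 v) = ls (a1 x) (ls y v)) ∧
  (∀ x y v, rs (a2 x) (lp y v + ls y v) = ls (a1 y) (rs x v)) ∧
  (∀ x y v, rs (a2 x) (rp y v + rs y v) = rs (s y x) (b1 v)) ∧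
  (∀ x v, b1 (lp x v) = lp (a1 x) (b1 v)) ∧
  (∀ x v, b1 (rp x v) = rp (a1 x) (b1 v)) ∧
  (∀ x v, b2 (lp x v) = lp (a2 x) (b2 v)) ∧
  (∀ x v, b2 (rp x v) = rp (a2 x) (b2 v)) ∧
  (∀ x v, b1 (ls x v) = ls (a1 x) (b1 v)) ∧
  (∀ x v, b1 (rs x v) = rs (a1 x) (b1 v)) ∧
  (∀ x v, b2 (ls x v) = ls (a2 x) (b2 v)) ∧
  (∀ x v, b2 (rs x v) = rs (a2 x) (b2 v))

/-- The three compatibility conditions of a noncommutative BiHom-pre-Poisson algebra. -/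
def BHPPCompat (p s st : A → A → A) (a1 a2 : A → A) : Prop :=
  (∀ x y z, p (st (a2 x) (a1 y) - st (a2 y) (a1 x)) (a2 z) =
      st (a1 (a2 x)) (p (a1 y) z) - p (a1 (a2 y)) (st (a1 x) z)) ∧
  (∀ x y z, s (a2 x) (st (a1 (a2 y)) (a1 z) - st (a2 z) (a1 (a1 y))) =
      st (a1 (a2 (a2 y))) (s x (a1 z)) - s (st (a2 (a2 y)) x) (a1 (a2 z))) ∧
  (∀ x y z, st (p (a2 x) (a1 y) + s (a2 x) (a1 y)) (a2 z) =
      s (st (a2 x) (a1 z)) (a2 y) + p (a1 (a2 x)) (st (a1 y) z))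

/-- Noncommutative BiHom-pre-Poisson algebra. -/
def BHPrePoisson (p s st : A → A → A) (a1 a2 : A → A) : Prop :=
  BHDendAlg p s a1 a2 ∧ BHPreLieAlg st a1 a2 ∧ BHPPCompat p s st a1 a2

/-- Bimodule of a noncommutative BiHom-pre-Poisson algebra. -/
def BHPrePoissonBimod (p s st : A → A → A) (a1 a2 : A → A)
    (lp rp ls rs lst rst : A → V → V) (b1 b2 : V → V) : Prop :=
  BHPreLieBimod st a1 a2 lst rst b1 b2 ∧
  BHDendBimod p s a1 a2 lp rp ls rs b1 b2 ∧
  (∀ x y v, lp (st (a2 x) (a1 y) - st (a2 y) (a1 x)) (b2 v) =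
      lst (a1 (a2 x)) (lp (a1 y) v) - lp (a1 (a2 y)) (lst (a1 x) v)) ∧
  (∀ x y v, rp (a2 x) (lst (a2 y) (b1 v) - rst (a1 y) (b2 v)) =
      lst (a1 (a2 y)) (rp x (b1 v)) - rp (st (a1 y) x) (b1 (b2 v))) ∧
  (∀ x y v, - rp (a2 x) (lst (a2 y) (b1 v) - rst (a1 y) (b2 v)) =
      rst (p (a1 y) x) (b1 (b2 v)) - lp (a1 (a2 y)) (rst x (b1 v))) ∧
  (∀ x y v, ls (a2 x) (lst (a1 (a2 y)) (b1 v) - rst (a1 (a1 y)) (b2 v)) =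
      lst (a1 (a2 (a2 y))) (ls x (b1 v)) - ls (st (a2 (a2 y)) x) (b1 (b2 v))) ∧
  (∀ x y v, rs (st (a2 (a1 x)) (a1 y) - st (a2 y) (a1 (a1 x))) (b2 v) =
      lst (a1 (a2 (a2 x))) (rs (a1 y) v) - rs (a1 (a2 y)) (lst (a2 (a2 x)) v)) ∧
  (∀ x y v, - ls (a2 x) (lst (a2 y) (b1 (b1 v)) - rst (a1 y) (b2 (b1 v))) =
      rst (s x (a1 y)) (b1 (b2 (b2 v))) - rs (a1 (a2 y)) (rst x (b2 (b2 v)))) ∧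
  (∀ x y v, lst (p (a2 x) (a1 y) + s (a2 x) (a1 y)) (b2 v) =
      rs (a2 y) (lst (a2 x) (b1 v)) + lp (a1 (a2 x)) (lst (a1 y) v)) ∧
  (∀ x y v, rst (a2 x) (lp (a2 y) (b1 v) + ls (a2 y) (b1 v)) =
      ls (st (a2 y) (a1 x)) (b2 v) + lp (a1 (a2 y)) (rst x (b1 v))) ∧
  (∀ x y v, rst (a2 x) (rp (a1 y) (b2 v) + rs (a1 y) (b2 v)) =
      rs (a2 y) (rst (a1 x) (b2 v)) + rp (st (a1 y) x) (b1 (b2 v)))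

end Defs

section SemidirectProduct

variable {A V : Type*}

theorem bhMultip_of_inverse {m : A → A → A} {a ainv : A → A} (hm : BHMultip m a)
    (hl : Function.LeftInverse ainv a) (hr : Function.RightInverse ainv a) :
    BHMultip m ainv := fun x y => by
  rw [← hl (m (ainv x) (ainv y)), hm, hr, hr]

theorem bhComm2_prodMap {a1 a2 : A → A} {b1 b2 : V → V} (ha : BHComm2 a1 a2)
    (hb : BHComm2 b1 b2) : BHComm2 (Prod.map a1 b1) (Prod.map a2 b2) :=
  fun p => Prod.ext (ha p.1) (hb p.2)

variable [AddCommGroup V]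

def bhSemidirectBracket (br : A → A → A) (ρ : A → V → V) (a1inv a2 : A → A) (b1 b2inv : V → V)
    (p q : A × V) : A × V :=
  (br p.1 q.1, ρ p.1 q.2 - ρ (a1inv (a2 q.1)) (b1 (b2inv p.2)))

variable {br : A → A → A} {a1 a2 a1inv : A → A} {ρ : A → V →+ V}
  {b1 b2 : V →+ V} {b2inv : V → V}

local notation "bracket" => bhSemidirectBracket br (fun x => ρ x) a1inv a2 b1 b2inv

theorem bhSemidirectBracket_prodMap_apply (hcA : BHComm2 a1 a2)
    (ha1l : Function.LeftInverse a1inv a1) (hb2l : Function.LeftInverse b2inv b2) (p q : A × V) :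
    bracket (Prod.map a2 b2 p) (Prod.map a1 b1 q) =
      (br (a2 p.1) (a1 q.1), ρ (a2 p.1) (b1 q.2) - ρ (a2 q.1) (b1 p.2)) := by
  simp only [bhSemidirectBracket, Prod.map_fst, Prod.map_snd]
  rw [← hcA, ha1l, hb2l]

variable [AddCommGroup A]

theorem bhMultip_bhSemidirectBracket_left (hA : BHLieAlg br a1 a2)
    (hrep : BHLieRep br a1 a2 (fun x v => ρ x v) b1 b2)
    (ha1l : Function.LeftInverse a1inv a1) (ha1r : Function.RightInverse a1inv a1)
    (hb2l : Function.LeftInverse b2inv b2) (hb2r : Function.RightInverse b2inv b2) :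
    BHMultip bracket (Prod.map a1 b1) := by
  obtain ⟨hcA, hm1, -, -, -⟩ := hA
  obtain ⟨hcb, -, hb1, -⟩ := hrep
  have hb1inv : BHComm2 b1 b2inv := Function.Semiconj.inverses_right hcb hb2r hb2l
  intro p q
  refine Prod.ext (hm1 p.1 q.1) ?_
  simp only [bhSemidirectBracket, Prod.map_fst, Prod.map_snd, map_sub, hb1]
  rw [ha1r, ← hcA, ha1l, hb1inv]

theorem bhMultip_bhSemidirectBracket_right (hA : BHLieAlg br a1 a2)
    (hrep : BHLieRep br a1 a2 (fun x v => ρ x v) b1 b2)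
    (ha1l : Function.LeftInverse a1inv a1) (ha1r : Function.RightInverse a1inv a1)
    (hb2l : Function.LeftInverse b2inv b2) (hb2r : Function.RightInverse b2inv b2) :
    BHMultip bracket (Prod.map a2 b2) := by
  obtain ⟨hcA, -, hm2, -, -⟩ := hA
  obtain ⟨hcb, -, -, hb2⟩ := hrep
  have ha2inv : BHComm2 a2 a1inv := (Function.Commute.symm hcA).semiconj.inverses_right ha1r ha1l
  intro p q
  refine Prod.ext (hm2 p.1 q.1) ?_
  simp only [bhSemidirectBracket, Prod.map_fst, Prod.map_snd, map_sub, hb2]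
  rw [ha2inv, ← hcb, hb2r, hb2l]

theorem bhSemidirectBracket_skew (hA : BHLieAlg br a1 a2) (ha1l : Function.LeftInverse a1inv a1)
    (hb2l : Function.LeftInverse b2inv b2) (p q : A × V) :
    bracket (Prod.map a2 b2 p) (Prod.map a1 b1 q) =
      -bracket (Prod.map a2 b2 q) (Prod.map a1 b1 p) := by
  obtain ⟨hcA, -, -, hskew, -⟩ := hA
  simp only [bhSemidirectBracket_prodMap_apply hcA ha1l hb2l]
  exact Prod.ext (hskew p.1 q.1) (neg_sub _ _).symm

theorem bhLieRep_action_twisted_bracket (hA : BHLieAlg br a1 a2)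
    (hrep : BHLieRep br a1 a2 (fun x v => ρ x v) b1 b2)
    (ha1l : Function.LeftInverse a1inv a1) (ha1r : Function.RightInverse a1inv a1)
    (y z : A) (u : V) :
    ρ (a1inv (a2 (br (a2 y) (a1 z)))) (b1 (b2 u)) =
      ρ (a2 (a2 y)) (ρ (a2 z) (b1 u)) - ρ (a2 (a2 z)) (ρ (a2 y) (b1 u)) := by
  obtain ⟨hcA, hm1, hm2, -, -⟩ := hA
  obtain ⟨hcb, hρ, -, -⟩ := hrep
  beta_reduce at hρ
  have ha2inv : BHComm2 a2 a1inv := (Function.Commute.symm hcA).semiconj.inverses_right ha1r ha1l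
  have hbr : a1inv (a2 (br (a2 y) (a1 z))) = br (a2 (a1inv (a2 y))) (a2 z) := by
    rw [hm2, ← hcA z, bhMultip_of_inverse hm1 ha1l ha1r, ha1l, ha2inv]
  rw [hbr, hcb, hρ, ha2inv, ha1r, ha1r]

theorem bhSemidirectBracket_jacobi (hA : BHLieAlg br a1 a2)
    (hrep : BHLieRep br a1 a2 (fun x v => ρ x v) b1 b2)
    (ha1l : Function.LeftInverse a1inv a1) (ha1r : Function.RightInverse a1inv a1)
    (hb2l : Function.LeftInverse b2inv b2) (p q r : A × V) :
    bracket (Prod.map a2 b2 (Prod.map a2 b2 p)) (bracket (Prod.map a2 b2 q) (Prod.map a1 b1 r)) +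
        bracket (Prod.map a2 b2 (Prod.map a2 b2 r))
          (bracket (Prod.map a2 b2 p) (Prod.map a1 b1 q)) +
        bracket (Prod.map a2 b2 (Prod.map a2 b2 q))
          (bracket (Prod.map a2 b2 r) (Prod.map a1 b1 p)) = 0 := by
  have hkey := bhLieRep_action_twisted_bracket hA hrep ha1l ha1r
  obtain ⟨hcA, -, -, -, hjac⟩ := hA
  simp only [bhSemidirectBracket_prodMap_apply hcA ha1l hb2l]
  refine Prod.ext (hjac p.1 q.1 r.1) ?_
  simp only [bhSemidirectBracket, Prod.map_fst, Prod.map_snd, Prod.snd_add, Prod.snd_zero,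
    map_sub, hb2l _, hkey]
  abel

theorem bhLieAlg_bhSemidirectBracket (hA : BHLieAlg br a1 a2)
    (hrep : BHLieRep br a1 a2 (fun x v => ρ x v) b1 b2)
    (ha1l : Function.LeftInverse a1inv a1) (ha1r : Function.RightInverse a1inv a1)
    (hb2l : Function.LeftInverse b2inv b2) (hb2r : Function.RightInverse b2inv b2) :
    BHLieAlg bracket (Prod.map a1 b1) (Prod.map a2 b2) :=
  ⟨bhComm2_prodMap hA.1 hrep.1,
    bhMultip_bhSemidirectBracket_left hA hrep ha1l ha1r hb2l hb2r,
    bhMultip_bhSemidirectBracket_right hA hrep ha1l ha1r hb2l hb2r,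
    bhSemidirectBracket_skew hA ha1l hb2l,
    bhSemidirectBracket_jacobi hA hrep ha1l ha1r hb2l⟩

end SemidirectProduct

theorem stmt_1 {K A V : Type*} [Field K] [AddCommGroup A] [Module K A]
    [AddCommGroup V] [Module K V]
    (br : A →ₗ[K] A →ₗ[K] A) (a1 a2 a1inv : A →ₗ[K] A)
    (ρ : A →ₗ[K] V →ₗ[K] V) (b1 b2 b2inv : V →ₗ[K] V)
    (hA : BHLieAlg (fun x y => br x y) (fun x => a1 x) (fun x => a2 x))
    (hrep : BHLieRep (fun x y => br x y) (fun x => a1 x) (fun x => a2 x)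
      (fun x v => ρ x v) (fun v => b1 v) (fun v => b2 v))
    (ha1l : ∀ x, a1inv (a1 x) = x) (ha1r : ∀ x, a1 (a1inv x) = x)
    (hb2l : ∀ v, b2inv (b2 v) = v) (hb2r : ∀ v, b2 (b2inv v) = v) :
    BHLieAlg
      (fun p q : A × V =>
        (br p.1 q.1, ρ p.1 q.2 - ρ (a1inv (a2 q.1)) (b1 (b2inv p.2))))
      (fun p => (a1 p.1, b1 p.2)) (fun p => (a2 p.1, b2 p.2)) :=
  bhLieAlg_bhSemidirectBracket (ρ := fun x => (ρ x).toAddMonoidHom) (b1 := b1.toAddMonoidHom)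
    (b2 := b2.toAddMonoidHom) hA hrep ha1l ha1r hb2l hb2r
end

section
/- Let (A, ∗, α₁, α₂) be a regular BiHom-pre-Lie algebra (i.e., α₁ and α₂ are bijective). Then (A, [·,·], α₁, α₂) is a BiHom-Lie algebra, where [x,y] = x∗y − α₁⁻¹α₂(y) ∗ α₁α₂⁻¹(x). -/
universe u

/-! On the images of `α₂` and `α₁` the bracket is a commutator,
`[α₂ x, α₁ y] = α₂ x ∗ α₁ y - α₂ y ∗ α₁ x`, which gives BiHom-skew-symmetry at once.
Each `αᵢ` is multiplicative for the bracket because it commutes with `α₁⁻¹` and `α₂⁻¹`.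
Expanding the BiHom-Jacobi sum gives twelve products, and the sum is minus the sum of three
instances of the BiHom-pre-Lie identity, taken at `(α₁⁻¹ α₂ u, α₁⁻¹ α₂ v, α₁ w)` for the
cyclic permutations `(u, v, w)` of `(y, z, x)`. -/

namespace BiHomPreLie

variable {R A : Type*} [CommSemiring R] [AddCommGroup A] [Module R A]
  (st : A →ₗ[R] A →ₗ[R] A) (α₁ α₂ : A ≃ₗ[R] A)

def bracket (x y : A) : A := st x y - st (α₁.symm (α₂ y)) (α₁ (α₂.symm x))

variable {st α₁ α₂}

lemma symm_map_st {e : A ≃ₗ[R] A} (h : ∀ x y, e (st x y) = st (e x) (e y)) (x y : A) :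
    e.symm (st x y) = st (e.symm x) (e.symm y) :=
  e.injective <| by rw [h, e.apply_symm_apply, e.apply_symm_apply, e.apply_symm_apply]

lemma commute_symm {f : A → A} {e : A ≃ₗ[R] A} (h : Function.Commute f e) :
    Function.Commute f e.symm :=
  h.inverses_right e.apply_symm_apply e.symm_apply_apply

lemma bracket_eq_sub_swap (hc : Function.Commute α₁ α₂) (x y : A) :
    bracket st α₁ α₂ (α₂ x) (α₁ y) = st (α₂ x) (α₁ y) - st (α₂ y) (α₁ x) := by
  rw [bracket, ← hc, α₁.symm_apply_apply, α₂.symm_apply_apply]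

lemma bhMultip_bracket {F : Type*} [FunLike F A A] [AddMonoidHomClass F A A] {f : F}
    (hf : ∀ x y, f (st x y) = st (f x) (f y))
    (h₁ : Function.Commute f α₁) (h₂ : Function.Commute f α₂) :
    BHMultip (bracket st α₁ α₂) f := by
  intro x y
  simp only [bracket, map_sub, hf, commute_symm h₁ _, h₂ _, h₁ _, commute_symm h₂ _]

lemma bracket_bracket_expand (hc : Function.Commute α₁ α₂)
    (h₁ : ∀ x y, α₁ (st x y) = st (α₁ x) (α₁ y)) (h₂ : ∀ x y, α₂ (st x y) = st (α₂ x) (α₂ y))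
    (x y z : A) :
    bracket st α₁ α₂ (α₂ (α₂ x)) (bracket st α₁ α₂ (α₂ y) (α₁ z)) =
      st (α₂ (α₂ x)) (st (α₂ y) (α₁ z)) - st (α₂ (α₂ x)) (st (α₂ z) (α₁ y)) -
        st (st (α₁.symm (α₂ (α₂ y))) (α₂ z)) (α₁ (α₂ x)) +
        st (st (α₁.symm (α₂ (α₂ z))) (α₂ y)) (α₁ (α₂ x)) := by
  rw [bracket_eq_sub_swap hc, bracket]
  simp only [α₂.symm_apply_apply, map_sub, LinearMap.sub_apply, h₂, symm_map_st h₁,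
    ← hc _, α₁.symm_apply_apply]
  abel

lemma preLie_shifted (hA : BHPreLieAlg (fun x y => st x y) α₁ α₂) (u v w : A) :
    st (st (α₁.symm (α₂ (α₂ u))) (α₂ v)) (α₁ (α₂ w)) - st (α₂ (α₂ u)) (st (α₂ v) (α₁ w)) =
      st (st (α₁.symm (α₂ (α₂ v))) (α₂ u)) (α₁ (α₂ w)) - st (α₂ (α₂ v)) (st (α₂ u) (α₁ w)) := by
  obtain ⟨hc, -, -, hpl⟩ := hA
  have := hpl (α₁.symm (α₂ u)) (α₁.symm (α₂ v)) (α₁ w)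
  simpa only [α₁.apply_symm_apply, hc _, commute_symm (Function.Commute.symm hc) _] using this

theorem bhLieAlg_bracket (hA : BHPreLieAlg (fun x y => st x y) α₁ α₂) :
    BHLieAlg (bracket st α₁ α₂) α₁ α₂ := by
  have hc : Function.Commute α₁ α₂ := hA.1
  have h₁ : ∀ x y, α₁ (st x y) = st (α₁ x) (α₁ y) := hA.2.1
  have h₂ : ∀ x y, α₂ (st x y) = st (α₂ x) (α₂ y) := hA.2.2.1
  refine ⟨hc, bhMultip_bracket (f := α₁) h₁ (.refl _) hc,
    bhMultip_bracket (f := α₂) h₂ hc.symm (.refl _), fun x y => ?_, fun x y z => ?_⟩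
  · rw [bracket_eq_sub_swap hc, bracket_eq_sub_swap hc, neg_sub]
  · simp only [bracket_bracket_expand hc h₁ h₂]
    linear_combination (norm := abel)
      -(preLie_shifted hA y z x + preLie_shifted hA z x y + preLie_shifted hA x y z)

end BiHomPreLie

theorem stmt_2 {K A : Type*} [Field K] [AddCommGroup A] [Module K A]
    (st : A →ₗ[K] A →ₗ[K] A) (a1 a2 a1inv a2inv : A →ₗ[K] A)
    (hA : BHPreLieAlg (fun x y => st x y) (fun x => a1 x) (fun x => a2 x))
    (ha1l : ∀ x, a1inv (a1 x) = x) (ha1r : ∀ x, a1 (a1inv x) = x)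
    (ha2l : ∀ x, a2inv (a2 x) = x) (ha2r : ∀ x, a2 (a2inv x) = x) :
    BHLieAlg (fun x y => st x y - st (a1inv (a2 y)) (a1 (a2inv x)))
      (fun x => a1 x) (fun x => a2 x) :=
  BiHomPreLie.bhLieAlg_bracket
    (α₁ := .ofLinearMap a1 a1inv (LinearMap.ext ha1r) (LinearMap.ext ha1l))
    (α₂ := .ofLinearMap a2 a2inv (LinearMap.ext ha2r) (LinearMap.ext ha2l)) hA
end

section
/- Let (A, ≺, ≻, α₁, α₂) be a BiHom-dendriform algebra. Then (A, ·, α₁, α₂) with x·y := x≺y + x≻y is a BiHom-associative algebra. -/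
universe u

section DendriformToAssociative
variable {A : Type*} [AddCommGroup A]

theorem BHMultip.add {m n : A → A → A} {a : A → A} (ha : ∀ x y, a (x + y) = a x + a y)
    (hm : BHMultip m a) (hn : BHMultip n a) : BHMultip (fun x y => m x y + n x y) a := by
  intro x y
  rw [ha, hm, hn]

theorem BHDendAlg.bhAssocAlg {p s : A → A → A} {a1 a2 : A → A}
    (hp : ∀ x y z, p (x + y) z = p x z + p y z) (hs : ∀ x y z, s x (y + z) = s x y + s x z)
    (ha1 : ∀ x y, a1 (x + y) = a1 x + a1 y) (ha2 : ∀ x y, a2 (x + y) = a2 x + a2 y)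
    (h : BHDendAlg p s a1 a2) : BHAssocAlg (fun x y => p x y + s x y) a1 a2 := by
  obtain ⟨hcomm, hp1, hp2, hs1, hs2, hpp, hsp, hss⟩ := h
  refine ⟨hcomm, hp1.add ha1 hs1, hp2.add ha2 hs2, fun x y z => ?_⟩
  calc p (a1 x) (p y z + s y z) + s (a1 x) (p y z + s y z)
      = p (a1 x) (p y z + s y z) + s (a1 x) (p y z) + s (a1 x) (s y z) := by
        rw [hs, add_assoc]
    _ = p (p x y) (a2 z) + p (s x y) (a2 z) + s (p x y + s x y) (a2 z) := by
        rw [hpp, hsp, hss]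
    _ = p (p x y + s x y) (a2 z) + s (p x y + s x y) (a2 z) := by
        rw [hp]

end DendriformToAssociative

theorem stmt_4 {K A : Type*} [Field K] [AddCommGroup A] [Module K A]
    (p s : A →ₗ[K] A →ₗ[K] A) (a1 a2 : A →ₗ[K] A)
    (hA : BHDendAlg (fun x y => p x y) (fun x y => s x y) (fun x => a1 x) (fun x => a2 x)) :
    BHAssocAlg (fun x y => p x y + s x y) (fun x => a1 x) (fun x => a2 x) :=
  hA.bhAssocAlg p.map_add₂ (fun x => (s x).map_add) a1.map_add a2.map_add
end

section
/- Let (l≺, r≺, l≻, r≻, β₁, β₂, V) be a bimodule of a BiHom-dendriform algebra (A, ≺, ≻, α₁, α₂). Then (l≺ + l≻, r≺ + r≻, β₁, β₂, V) is a bimodule of the associated BiHom-associative algebra (A, · = ≺+≻, α₁, α₂). -/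
universe u

/-!
Split the associative actions as `l = l≺ + l≻`, `r = r≺ + r≻` and the product as `x·y = x≺y + x≻y`.
Each BiHom-associative bimodule identity then expands into three terms, and these are exactly the
three dendriform bimodule identities of the matching family (the first, second or third column of
the definition), so adding those three identities gives it.
-/

namespace BHDendBimod

variable {A V : Type*} [AddCommGroup A] [AddCommGroup V]
  {p s : A → A → A} {a1 a2 : A → A} {lp rp ls rs : A →+ V →+ V} {b1 b2 : V →+ V}

local notation "dendBimod" =>
  BHDendBimod p s a1 a2 (fun x v => lp x v) (fun x v => rp x v) (fun x v => ls x v)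
    (fun x v => rs x v) (fun v => b1 v) (fun v => b2 v)

theorem left_add_mul (h : dendBimod) (x y : A) (v : V) :
    (lp + ls) (p x y + s x y) (b2 v) = (lp + ls) (a1 x) ((lp + ls) y v) := by
  obtain ⟨-, h₁, -, -, h₂, -, -, h₃, -⟩ := h
  have e1 := h₁ x y v
  have e2 := h₂ x y v
  have e3 := h₃ x y v
  simp only [AddMonoidHom.add_apply, map_add] at e1 e2 e3 ⊢
  rw [e1, e2, ← e3]
  abel

theorem right_add_mul (h : dendBimod) (x y : A) (v : V) :
    (rp + rs) (p x y + s x y) (b1 v) = (rp + rs) (a2 y) ((rp + rs) x v) := by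
  obtain ⟨-, -, -, h₁, -, -, h₂, -, -, h₃, -⟩ := h
  have e1 := h₁ x y v
  have e2 := h₂ y x v
  have e3 := h₃ y x v
  simp only [AddMonoidHom.add_apply, map_add] at e1 e2 e3 ⊢
  rw [e1, ← e2, ← e3]
  abel

theorem left_right_add_comm (h : dendBimod) (x y : A) (v : V) :
    (lp + ls) (a1 x) ((rp + rs) y v) = (rp + rs) (a2 y) ((lp + ls) x v) := by
  obtain ⟨-, -, h₁, -, -, h₂, -, -, h₃, -⟩ := h
  have e1 := h₁ y x v
  have e2 := h₂ y x v
  have e3 := h₃ y x v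
  simp only [AddMonoidHom.add_apply, map_add] at e1 e2 e3 ⊢
  rw [e1, e2, ← e3]
  abel

theorem toBHAssocBimod (h : dendBimod) :
    BHAssocBimod (fun x y => p x y + s x y) a1 a2 (fun x v => lp x v + ls x v)
      (fun x v => rp x v + rs x v) (fun v => b1 v) (fun v => b2 v) := by
  refine ⟨h.1, left_add_mul h, right_add_mul h, left_right_add_comm h, ?_, ?_, ?_, ?_⟩ <;>
  · obtain ⟨-, -, -, -, -, -, -, -, -, -, hlp₁, hrp₁, hlp₂, hrp₂, hls₁, hrs₁, hls₂, hrs₂⟩ := h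
    intro x v
    simp only [map_add, *]

end BHDendBimod

theorem stmt_5_general {K A V : Type*} [Field K] [AddCommGroup A] [Module K A]
    [AddCommGroup V] [Module K V]
    (p s : A →ₗ[K] A →ₗ[K] A) (a1 a2 : A →ₗ[K] A)
    (lp rp ls rs : A →ₗ[K] V →ₗ[K] V) (b1 b2 : V →ₗ[K] V)
    (hbim : BHDendBimod (fun x y => p x y) (fun x y => s x y) (fun x => a1 x) (fun x => a2 x)
      (fun x v => lp x v) (fun x v => rp x v) (fun x v => ls x v) (fun x v => rs x v) (fun v => b1 v) (fun v => b2 v)) :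
    BHAssocBimod (fun x y => p x y + s x y) (fun x => a1 x) (fun x => a2 x)
      (fun x v => lp x v + ls x v) (fun x v => rp x v + rs x v)
      (fun v => b1 v) (fun v => b2 v) :=
  let toAdd (f : A →ₗ[K] V →ₗ[K] V) : A →+ V →+ V := LinearMap.toAddMonoidHom'.comp f.toAddMonoidHom
  BHDendBimod.toBHAssocBimod (lp := toAdd lp) (rp := toAdd rp) (ls := toAdd ls) (rs := toAdd rs)
    (b1 := b1.toAddMonoidHom) (b2 := b2.toAddMonoidHom) hbim

theorem stmt_5 {K A V : Type*} [Field K] [AddCommGroup A] [Module K A]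
    [AddCommGroup V] [Module K V]
    (p s : A →ₗ[K] A →ₗ[K] A) (a1 a2 : A →ₗ[K] A)
    (lp rp ls rs : A →ₗ[K] V →ₗ[K] V) (b1 b2 : V →ₗ[K] V)
    (hA : BHDendAlg (fun x y => p x y) (fun x y => s x y) (fun x => a1 x) (fun x => a2 x))
    (hbim : BHDendBimod (fun x y => p x y) (fun x y => s x y) (fun x => a1 x) (fun x => a2 x)
      (fun x v => lp x v) (fun x v => rp x v) (fun x v => ls x v) (fun x v => rs x v) (fun v => b1 v) (fun v => b2 v)) :
    BHAssocBimod (fun x y => p x y + s x y) (fun x => a1 x) (fun x => a2 x)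
      (fun x v => lp x v + ls x v) (fun x v => rp x v + rs x v)
      (fun v => b1 v) (fun v => b2 v) :=
  stmt_5_general p s a1 a2 lp rp ls rs b1 b2 hbim
end

section
/- Let (A, ·, α₁, α₂) be a regular BiHom-associative algebra (α₁, α₂ bijective). Then (A, ·, {·,·}, α₁, α₂) with {x,y} := x·y − α₁⁻¹α₂(y)·α₁α₂⁻¹(x) is a noncommutative BiHom-Poisson algebra. -/
universe u

/-!
Untwisting: `m x y := α₁⁻¹ x · α₂⁻¹ y` is an associative product for which `α₁, α₂` are
commuting automorphisms, and `x · y = m (α₁ x) (α₂ y)`, `{x, y} = [α₁ x, α₂ y]` with `[·,·]` the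
commutator of `m`. The commutator of an associative product is a noncommutative Poisson bracket,
and twisting a noncommutative Poisson algebra by two commuting automorphisms gives a
noncommutative BiHom-Poisson algebra.
-/

open Function LinearMap

theorem bhMultip_of_inverse_s7 {A : Type*} {m : A → A → A} {a a' : A → A} (h : BHMultip m a)
    (hl : LeftInverse a' a) (hr : RightInverse a' a) : BHMultip m a' :=
  fun x y => hl.injective <| by rw [hr, h, hr, hr]

section

variable {R A : Type*} [CommSemiring R] [AddCommGroup A] [Module R A]

structure IsNCPoisson (m br : A →ₗ[R] A →ₗ[R] A) : Prop where
  assoc : ∀ x y z, m (m x y) z = m x (m y z)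
  skew : ∀ x y, br x y = -br y x
  jacobi : ∀ x y z, br x (br y z) + br z (br x y) + br y (br z x) = 0
  leibniz : ∀ x y z, br x (m y z) = m (br x y) z + m y (br x z)

def commBracket (m : A →ₗ[R] A →ₗ[R] A) : A →ₗ[R] A →ₗ[R] A := m - m.flip

@[simp]
theorem commBracket_apply (m : A →ₗ[R] A →ₗ[R] A) (x y : A) :
    commBracket m x y = m x y - m y x := rfl

theorem isNCPoisson_commBracket {m : A →ₗ[R] A →ₗ[R] A}
    (hm : ∀ x y z, m (m x y) z = m x (m y z)) : IsNCPoisson m (commBracket m) where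
  assoc := hm
  skew x y := by simp
  jacobi x y z := by simp only [commBracket_apply, map_sub, hm]; abel
  leibniz x y z := by simp only [commBracket_apply, map_sub, LinearMap.sub_apply, hm]; abel

theorem bhMultip_commBracket {m : A →ₗ[R] A →ₗ[R] A} {a : A →ₗ[R] A}
    (h : BHMultip (fun x y => m x y) a) : BHMultip (fun x y => commBracket m x y) a :=
  fun x y => by simp only [commBracket_apply, map_sub, h x y, h y x]

theorem bhMultip_compl₁₂ {m : A →ₗ[R] A →ₗ[R] A} {a b₁ b₂ : A →ₗ[R] A}
    (h : BHMultip (fun x y => m x y) a) (h₁ : BHComm2 a b₁) (h₂ : BHComm2 a b₂) :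
    BHMultip (fun x y => m.compl₁₂ b₁ b₂ x y) a :=
  fun x y => by simp only [compl₁₂_apply, h _ _, h₁ x, h₂ y]

variable {m br : A →ₗ[R] A →ₗ[R] A} {a₁ a₂ : A →ₗ[R] A}

theorem IsNCPoisson.bhNCPoisson_compl₁₂ (hP : IsNCPoisson m br) (hc : BHComm2 a₁ a₂)
    (hm₁ : BHMultip (fun x y => m x y) a₁) (hm₂ : BHMultip (fun x y => m x y) a₂)
    (hbr₁ : BHMultip (fun x y => br x y) a₁) (hbr₂ : BHMultip (fun x y => br x y) a₂) :
    BHNCPoisson (fun x y => m.compl₁₂ a₁ a₂ x y) (fun x y => br.compl₁₂ a₁ a₂ x y) a₁ a₂ := by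
  have hc' : BHComm2 a₂ a₁ := Function.Commute.symm hc
  refine ⟨⟨hc, bhMultip_compl₁₂ hm₁ (fun _ => rfl) hc, bhMultip_compl₁₂ hm₂ hc' (fun _ => rfl),
      fun x y z => ?_⟩, ⟨hc, bhMultip_compl₁₂ hbr₁ (fun _ => rfl) hc,
      bhMultip_compl₁₂ hbr₂ hc' (fun _ => rfl), fun x y => ?_, fun x y z => ?_⟩, fun x y z => ?_⟩
  all_goals simp only [compl₁₂_apply, hm₁ _ _, hm₂ _ _, hbr₁ _ _, hbr₂ _ _, hc _]
  · exact (hP.assoc _ _ _).symm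
  · exact hP.skew _ _
  · exact hP.jacobi _ _ _
  · exact hP.leibniz _ _ _

theorem assoc_compl₁₂_of_bhAssocAlg {mul : A →ₗ[R] A →ₗ[R] A} {a₁ a₂ a₁' a₂' : A →ₗ[R] A}
    (hA : BHAssocAlg (fun x y => mul x y) a₁ a₂)
    (h₁l : LeftInverse a₁' a₁) (h₁r : RightInverse a₁' a₁)
    (h₂l : LeftInverse a₂' a₂) (h₂r : RightInverse a₂' a₂) (x y z : A) :
    mul.compl₁₂ a₁' a₂' (mul.compl₁₂ a₁' a₂' x y) z =
      mul.compl₁₂ a₁' a₂' x (mul.compl₁₂ a₁' a₂' y z) := by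
  obtain ⟨hc, hm₁, hm₂, hassoc⟩ := hA
  have hc' : Function.Commute a₁' a₂' :=
    Semiconj.inverse_left (Semiconj.inverses_right hc h₂r h₂l) h₁l h₁r
  have key := hassoc (a₁' (a₁' x)) (a₂' (a₁' y)) (a₂' (a₂' z))
  beta_reduce at key
  rw [h₁r, h₂r] at key
  simp only [compl₁₂_apply, bhMultip_of_inverse_s7 hm₁ h₁l h₁r _ _,
    bhMultip_of_inverse_s7 hm₂ h₂l h₂r _ _]
  rw [hc']
  exact key.symm

end

theorem stmt_7 {K A : Type*} [Field K] [AddCommGroup A] [Module K A]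
    (mul : A →ₗ[K] A →ₗ[K] A) (a1 a2 a1inv a2inv : A →ₗ[K] A)
    (hA : BHAssocAlg (fun x y => mul x y) (fun x => a1 x) (fun x => a2 x))
    (ha1l : ∀ x, a1inv (a1 x) = x) (ha1r : ∀ x, a1 (a1inv x) = x)
    (ha2l : ∀ x, a2inv (a2 x) = x) (ha2r : ∀ x, a2 (a2inv x) = x) :
    BHNCPoisson (fun x y => mul x y)
      (fun x y => mul x y - mul (a1inv (a2 y)) (a1 (a2inv x)))
      (fun x => a1 x) (fun x => a2 x) := by
  set m := mul.compl₁₂ a1inv a2inv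
  have hP := isNCPoisson_commBracket (assoc_compl₁₂_of_bhAssocAlg hA ha1l ha1r ha2l ha2r)
  obtain ⟨hc, hm₁, hm₂, -⟩ := hA
  have hc₁₁ : BHComm2 a1 a1inv := Semiconj.inverses_right (Function.Commute.refl _) ha1r ha1l
  have hc₁₂ : BHComm2 a1 a2inv := Semiconj.inverses_right hc ha2r ha2l
  have hc₂₁ : BHComm2 a2 a1inv := Semiconj.inverses_right (Function.Commute.symm hc) ha1r ha1l
  have hc₂₂ : BHComm2 a2 a2inv := Semiconj.inverses_right (Function.Commute.refl _) ha2r ha2l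
  have hm₁' : BHMultip (fun x y => m x y) a1 := bhMultip_compl₁₂ hm₁ hc₁₁ hc₁₂
  have hm₂' : BHMultip (fun x y => m x y) a2 := bhMultip_compl₁₂ hm₂ hc₂₁ hc₂₂
  have hmul : (fun x y => mul x y) = fun x y => m.compl₁₂ a1 a2 x y := by
    ext x y; simp [m, ha1l, ha2l]
  have hbr : (fun x y => mul x y - mul (a1inv (a2 y)) (a1 (a2inv x))) =
      fun x y => (commBracket m).compl₁₂ a1 a2 x y := by
    ext x y; simp [m, ha1l, ha2l, hc₁₂ x]
  rw [hmul, hbr]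
  exact hP.bhNCPoisson_compl₁₂ hc hm₁' hm₂' (bhMultip_commBracket hm₁') (bhMultip_commBracket hm₂')
end

section
/- Let T : V → A be an O-operator of a BiHom-associative algebra (A, ·, α₁, α₂) associated to a bimodule (l, r, β₁, β₂, V). Then V carries a BiHom-dendriform algebra structure with u≻v = l(T(u))v and u≺v = r(T(v))u, and structure maps β₁, β₂. -/
/-! Each dendriform axiom for `u ≺ v = r (T v) u` and `u ≻ v = l (T u) v` is a single bimodule
axiom evaluated at elements of `T V`: the axioms for `r (x·y)` and `l (x·y)` give the `≺≺` and `≻≻`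
axioms once `T u · T v` is rewritten by the O-operator identity, and the commutation of `l` with `r`
gives the mixed one. Multiplicativity of `β₁, β₂` comes from their compatibility with the actions
together with `αᵢ T = T βᵢ`. -/

universe u

section OOperator

variable {A V : Type*}
  {mul : A → A → A} {a1 a2 : A → A} {l r : A → V → V} {b1 b2 : V → V} {T : V → A}

def IsOOperator [Add V] (mul : A → A → A) (a1 a2 : A → A) (l r : A → V → V) (b1 b2 : V → V)
    (T : V → A) : Prop :=
  (∀ v, a1 (T v) = T (b1 v)) ∧ (∀ v, a2 (T v) = T (b2 v)) ∧
    ∀ u v, mul (T u) (T v) = T (l (T u) v + r (T v) u)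

theorem bhMultip_right_of_intertwining {a : A → A} {b : V → V}
    (hr : ∀ x v, b (r x v) = r (a x) (b v)) (hT : ∀ v, a (T v) = T (b v)) :
    BHMultip (fun u v => r (T v) u) b := by
  intro u v
  rw [hr, hT]

theorem bhMultip_left_of_intertwining {a : A → A} {b : V → V}
    (hl : ∀ x v, b (l x v) = l (a x) (b v)) (hT : ∀ v, a (T v) = T (b v)) :
    BHMultip (fun u v => l (T u) v) b := by
  intro u v
  rw [hl, hT]

theorem prec_prec_of_oOperator [AddCommMagma V]
    (hrm : ∀ x y v, r (mul x y) (b1 v) = r (a2 y) (r x v))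
    (hT2 : ∀ v, a2 (T v) = T (b2 v))
    (hT : ∀ u v, mul (T u) (T v) = T (l (T u) v + r (T v) u)) (x y z : V) :
    r (T (b2 z)) (r (T y) x) = r (T (r (T z) y + l (T y) z)) (b1 x) := by
  rw [← hT2, ← hrm, hT, add_comm]

theorem succ_prec_of_oOperator
    (hlr : ∀ x y v, l (a1 x) (r y v) = r (a2 y) (l x v))
    (hT1 : ∀ v, a1 (T v) = T (b1 v)) (hT2 : ∀ v, a2 (T v) = T (b2 v)) (x y z : V) :
    r (T (b2 z)) (l (T x) y) = l (T (b1 x)) (r (T z) y) := by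
  rw [← hT1, ← hT2, hlr]

theorem succ_succ_of_oOperator [AddCommMagma V]
    (hlm : ∀ x y v, l (mul x y) (b2 v) = l (a1 x) (l y v))
    (hT1 : ∀ v, a1 (T v) = T (b1 v))
    (hT : ∀ u v, mul (T u) (T v) = T (l (T u) v + r (T v) u)) (x y z : V) :
    l (T (b1 x)) (l (T y) z) = l (T (r (T y) x + l (T x) y)) (b2 z) := by
  rw [← hT1, ← hlm, hT, add_comm]

theorem bhDendAlg_of_isOOperator [AddCommGroup V] (hbim : BHAssocBimod mul a1 a2 l r b1 b2)
    (hT : IsOOperator mul a1 a2 l r b1 b2 T) :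
    BHDendAlg (fun u v => r (T v) u) (fun u v => l (T u) v) b1 b2 := by
  obtain ⟨hc, hlm, hrm, hlr, hb1l, hb1r, hb2l, hb2r⟩ := hbim
  obtain ⟨hT1, hT2, hTmul⟩ := hT
  exact ⟨hc, bhMultip_right_of_intertwining hb1r hT1, bhMultip_right_of_intertwining hb2r hT2,
    bhMultip_left_of_intertwining hb1l hT1, bhMultip_left_of_intertwining hb2l hT2,
    prec_prec_of_oOperator hrm hT2 hTmul, succ_prec_of_oOperator hlr hT1 hT2,
    succ_succ_of_oOperator hlm hT1 hTmul⟩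

end OOperator

theorem stmt_15_general {K A V : Type*} [Field K] [AddCommGroup A] [Module K A]
    [AddCommGroup V] [Module K V]
    (mul : A →ₗ[K] A →ₗ[K] A) (a1 a2 : A →ₗ[K] A)
    (l r : A →ₗ[K] V →ₗ[K] V) (b1 b2 : V →ₗ[K] V) (T : V →ₗ[K] A)
    (hbim : BHAssocBimod (fun x y => mul x y) (fun x => a1 x) (fun x => a2 x)
      (fun x v => l x v) (fun x v => r x v) (fun v => b1 v) (fun v => b2 v))
    (hT1 : ∀ v, a1 (T v) = T (b1 v)) (hT2 : ∀ v, a2 (T v) = T (b2 v))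
    (hT : ∀ u v, mul (T u) (T v) = T (l (T u) v + r (T v) u)) :
    BHDendAlg (fun u v => r (T v) u) (fun u v => l (T u) v)
      (fun v => b1 v) (fun v => b2 v) :=
  bhDendAlg_of_isOOperator (T := fun v => T v) hbim ⟨hT1, hT2, hT⟩

theorem stmt_15 {K A V : Type*} [Field K] [AddCommGroup A] [Module K A]
    [AddCommGroup V] [Module K V]
    (mul : A →ₗ[K] A →ₗ[K] A) (a1 a2 : A →ₗ[K] A)
    (l r : A →ₗ[K] V →ₗ[K] V) (b1 b2 : V →ₗ[K] V) (T : V →ₗ[K] A)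
    (hA : BHAssocAlg (fun x y => mul x y) (fun x => a1 x) (fun x => a2 x))
    (hbim : BHAssocBimod (fun x y => mul x y) (fun x => a1 x) (fun x => a2 x)
      (fun x v => l x v) (fun x v => r x v) (fun v => b1 v) (fun v => b2 v))
    (hT1 : ∀ v, a1 (T v) = T (b1 v)) (hT2 : ∀ v, a2 (T v) = T (b2 v))
    (hT : ∀ u v, mul (T u) (T v) = T (l (T u) v + r (T v) u)) :
    BHDendAlg (fun u v => r (T v) u) (fun u v => l (T u) v)
      (fun v => b1 v) (fun v => b2 v) :=
  stmt_15_general mul a1 a2 l r b1 b2 T hbim hT1 hT2 hT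
end

section
/- Let T : V → A be an O-operator of a BiHom-Lie algebra (A, {·,·}, α₁, α₂) with respect to a representation (ρ, β₁, β₂, V). Then (V, ∗, β₁, β₂) with u∗v := ρ(T(u))v is a BiHom-pre-Lie algebra. -/
universe u

/-! The pre-Lie identity for `u ∗ v = ρ(T u) v` is the representation identity evaluated at
`x = T u`, `y = T (β₁ v)`: by the O-operator property, `{α₂ (T u), T (β₁ v)}` is the
`T`-image of the skew-symmetrization `β₂ u ∗ β₁ v - β₂ v ∗ β₁ u`. -/

section OOperator

variable {A V : Type*}

theorem bhMultip_induced_product (ρ : A → V → V) (T : V → A) (a : A → A) (b : V → V)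
    (hρ : ∀ x v, b (ρ x v) = ρ (a x) (b v)) (hT : ∀ v, a (T v) = T (b v)) :
    BHMultip (fun u v => ρ (T u) v) b := by
  intro u v
  rw [hρ, hT]

theorem bracket_twisted_eq_of_oOperator [Sub V] (br : A → A → A) (ρ : A → V → V)
    (b1 b2 b1inv b2inv : V → V) (T : V → A) (hb : BHComm2 b1 b2)
    (hb1l : ∀ v, b1inv (b1 v) = v) (hb2l : ∀ v, b2inv (b2 v) = v)
    (hT : ∀ u v, br (T u) (T v) = T (ρ (T u) v - ρ (T (b1inv (b2 v))) (b1 (b2inv u))))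
    (u v : V) :
    br (T (b2 u)) (T (b1 v)) = T (ρ (T (b2 u)) (b1 v) - ρ (T (b2 v)) (b1 u)) := by
  rw [hT, ← hb, hb1l, hb2l]

theorem bhPreLie_identity_of_bhLieRep {R : Type*} [CommSemiring R] [AddCommGroup A]
    [AddCommGroup V] [Module R A] [Module R V]
    (br : A → A → A) (a1 a2 : A → A) (ρ : A →ₗ[R] V →ₗ[R] V) (b1 b2 : V → V) (T : V →ₗ[R] A)
    (hrep : BHLieRep br a1 a2 (fun x v => ρ x v) b1 b2)
    (hT1 : ∀ v, a1 (T v) = T (b1 v)) (hT2 : ∀ v, a2 (T v) = T (b2 v))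
    (hbr : ∀ u v, br (T (b2 u)) (T (b1 v)) = T (ρ (T (b2 u)) (b1 v) - ρ (T (b2 v)) (b1 u)))
    (u v w : V) :
    ρ (T (ρ (T (b2 u)) (b1 v))) (b2 w) - ρ (T (b1 (b2 u))) (ρ (T (b1 v)) w) =
      ρ (T (ρ (T (b2 v)) (b1 u))) (b2 w) - ρ (T (b1 (b2 v))) (ρ (T (b1 u)) w) := by
  obtain ⟨hb, hρ, -, -⟩ := hrep
  have key := hρ (T u) (T (b1 v)) w
  beta_reduce at key
  rw [hT2, hbr, hT1, hT2, hT1, ← hb, map_sub, map_sub, LinearMap.sub_apply] at key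
  exact sub_eq_sub_iff_sub_eq_sub.mp key

end OOperator

theorem stmt_16_general {K A V : Type*} [Field K] [AddCommGroup A] [Module K A]
    [AddCommGroup V] [Module K V]
    (br : A →ₗ[K] A →ₗ[K] A) (a1 a2 : A →ₗ[K] A)
    (ρ : A →ₗ[K] V →ₗ[K] V) (b1 b2 b1inv b2inv : V →ₗ[K] V) (T : V →ₗ[K] A)
    (hrep : BHLieRep (fun x y => br x y) (fun x => a1 x) (fun x => a2 x)
      (fun x v => ρ x v) (fun v => b1 v) (fun v => b2 v))
    (hb1l : ∀ v, b1inv (b1 v) = v)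
    (hb2l : ∀ v, b2inv (b2 v) = v)
    (hT1 : ∀ v, a1 (T v) = T (b1 v)) (hT2 : ∀ v, a2 (T v) = T (b2 v))
    (hT : ∀ u v, br (T u) (T v) =
      T (ρ (T u) v - ρ (T (b1inv (b2 v))) (b1 (b2inv u)))) :
    BHPreLieAlg (fun u v => ρ (T u) v) (fun v => b1 v) (fun v => b2 v) := by
  have hbr := bracket_twisted_eq_of_oOperator (fun x y => br x y) (fun x v => ρ x v)
    b1 b2 b1inv b2inv T hrep.1 hb1l hb2l hT
  exact ⟨hrep.1, bhMultip_induced_product (fun x v => ρ x v) T a1 b1 hrep.2.2.1 hT1,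
    bhMultip_induced_product (fun x v => ρ x v) T a2 b2 hrep.2.2.2 hT2,
    bhPreLie_identity_of_bhLieRep _ _ _ ρ _ _ T hrep hT1 hT2 hbr⟩

theorem stmt_16 {K A V : Type*} [Field K] [AddCommGroup A] [Module K A]
    [AddCommGroup V] [Module K V]
    (br : A →ₗ[K] A →ₗ[K] A) (a1 a2 : A →ₗ[K] A)
    (ρ : A →ₗ[K] V →ₗ[K] V) (b1 b2 b1inv b2inv : V →ₗ[K] V) (T : V →ₗ[K] A)
    (hA : BHLieAlg (fun x y => br x y) (fun x => a1 x) (fun x => a2 x))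
    (hrep : BHLieRep (fun x y => br x y) (fun x => a1 x) (fun x => a2 x)
      (fun x v => ρ x v) (fun v => b1 v) (fun v => b2 v))
    (hb1l : ∀ v, b1inv (b1 v) = v) (hb1r : ∀ v, b1 (b1inv v) = v)
    (hb2l : ∀ v, b2inv (b2 v) = v) (hb2r : ∀ v, b2 (b2inv v) = v)
    (hT1 : ∀ v, a1 (T v) = T (b1 v)) (hT2 : ∀ v, a2 (T v) = T (b2 v))
    (hT : ∀ u v, br (T u) (T v) =
      T (ρ (T u) v - ρ (T (b1inv (b2 v))) (b1 (b2inv u)))) :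
    BHPreLieAlg (fun u v => ρ (T u) v) (fun v => b1 v) (fun v => b2 v) :=
  stmt_16_general br a1 a2 ρ b1 b2 b1inv b2inv T hrep hb1l hb2l hT1 hT2 hT
end
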